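/- Consider a function of the form f(x) = Tr[O · W_L S_L(x) ⋯ W_1 S_1(x) ρ (W_L S_L(x) ⋯ W_1 S_1(x))†], where each S_ℓ(x) = exp(−i x·G^{(ℓ)}) is generated by commuting Hermitian operators with difference set Ω^{(ℓ)} of eigenvalue differences, and W_ℓ are fixed unitaries. Then f is a finite trigonometric polynomial in x whose frequency support is contained in the Minkowski sum Ω^{(1)} ⊕ ⋯ ⊕ Ω^{(L)}. -/

import Mathlib

/-! Each layer is `W_ℓ S_ℓ(x) = ∑_i e^{-i⟨λ^{(ℓ)}_i, x⟩} W_ℓ U_ℓ E_{ii} U_ℓ†`, so expanding the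
ordered product over the layers writes the circuit as `∑_j e^{-i⟨∑_ℓ λ^{(ℓ)}_{j_ℓ}, x⟩} P_j` over
index paths `j`. The model is sesquilinear in the circuit matrix, so the pair of paths `(j, k)`
carries the phase `e^{-i⟨∑_ℓ (λ^{(ℓ)}_{j_ℓ} - λ^{(ℓ)}_{k_ℓ}), x⟩}`. -/

open Finset Matrix ComplexConjugate
open scoped ComplexOrder

theorem Matrix.mul_diagonal_mul_eq_sum_smul {n R : Type*} [Fintype n] [DecidableEq n]
    [CommSemiring R] (A B : Matrix n n R) (d : n → R) :
    A * diagonal d * B = ∑ i, d i • (A * single i i 1 * B) := by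
  simp only [← sum_single_eq_diagonal, Matrix.mul_sum, Matrix.sum_mul]
  refine sum_congr rfl fun i _ => ?_
  rw [← smul_mul_assoc, ← mul_smul_comm, smul_single, smul_eq_mul, mul_one]

theorem List.prod_reverse_ofFn_sum_smul {R A ι : Type*} [CommSemiring R] [Semiring A]
    [Algebra R A] [Fintype ι] :
    ∀ {m : ℕ} (g : Fin m → ι → R) (B : Fin m → ι → A),
      (List.ofFn fun ℓ => ∑ i, g ℓ i • B ℓ i).reverse.prod =
        ∑ j : Fin m → ι, (∏ ℓ, g ℓ (j ℓ)) • (List.ofFn fun ℓ => B ℓ (j ℓ)).reverse.prod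
  | 0, _, _ => by simp
  | m + 1, g, B => by
    rw [← (Fin.consEquiv fun _ => ι).sum_comp, Fintype.sum_prod_type, List.ofFn_succ,
      List.reverse_cons, List.prod_append, List.prod_singleton,
      prod_reverse_ofFn_sum_smul (fun ℓ => g ℓ.succ) (fun ℓ => B ℓ.succ), sum_mul, sum_comm]
    refine sum_congr rfl fun j _ => ?_
    rw [mul_sum]
    refine sum_congr rfl fun i _ => ?_
    simp only [Fin.consEquiv_apply, Fin.prod_univ_succ, Fin.cons_zero, Fin.cons_succ,
      List.ofFn_succ, List.reverse_cons, List.prod_append, List.prod_singleton,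
      smul_mul_assoc, mul_smul_comm, smul_smul]

theorem Matrix.trace_mul_sum_smul_mul_star_sum_smul {ι n R : Type*} [Fintype ι] [Fintype n]
    [CommSemiring R] [StarRing R] (O ρ : Matrix n n R) (a : ι → R) (P : ι → Matrix n n R) :
    trace (O * (∑ j, a j • P j) * ρ * star (∑ k, a k • P k)) =
      ∑ j, ∑ k, a j * star (a k) * trace (O * P j * ρ * star (P k)) := by
  simp only [Matrix.sum_mul, star_sum, star_smul, trace_sum, mul_smul_comm,
    smul_mul_assoc, trace_smul, smul_eq_mul, mul_sum]
  rw [sum_comm]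
  exact sum_congr rfl fun j _ => sum_congr rfl fun k _ => by ring

theorem Complex.prod_exp_mul_conj_prod_exp {ι κ : Type*} [Fintype ι] [Fintype κ]
    (a b : ι → κ → ℝ) (x : κ → ℝ) :
    (∏ ℓ, exp (-I * ∑ α, (a ℓ α : ℂ) * (x α : ℂ))) *
        conj (∏ ℓ, exp (-I * ∑ α, (b ℓ α : ℂ) * (x α : ℂ))) =
      exp (-I * ∑ α, ((∑ ℓ, (a ℓ α - b ℓ α) : ℝ) : ℂ) * (x α : ℂ)) := by
  have hfreq : ∑ α, ((∑ ℓ, (a ℓ α - b ℓ α) : ℝ) : ℂ) * (x α : ℂ) =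
      ∑ ℓ, ∑ α, (a ℓ α : ℂ) * (x α : ℂ) - ∑ ℓ, ∑ α, (b ℓ α : ℂ) * (x α : ℂ) := by
    push_cast
    simp only [sub_mul, sum_mul, sum_sub_distrib]
    rw [sum_comm, sum_comm (γ := κ)]
  simp only [← exp_conj, map_mul, map_neg, map_sum, conj_I, conj_ofReal, ← mul_sum,
    ← exp_sum, ← exp_add, hfreq]
  congr 1
  ring

theorem reuploading_minkowski_band_limit_general (n d L : ℕ)
    (U : Fin L → Matrix (Fin n) (Fin n) ℂ)
    (lam : Fin L → Fin n → Fin d → ℝ)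
    (S : Fin L → (Fin d → ℝ) → Matrix (Fin n) (Fin n) ℂ)
    (hS : ∀ ℓ x, S ℓ x =
      U ℓ *
        Matrix.diagonal (fun j =>
          Complex.exp ((-Complex.I) * ∑ α, ((lam ℓ j α : ℝ) : ℂ) * ((x α : ℝ) : ℂ))) *
        star (U ℓ))
    (W : Fin L → Matrix (Fin n) (Fin n) ℂ)
    (ρ O : Matrix (Fin n) (Fin n) ℂ)
    (f : (Fin d → ℝ) → ℂ)
    (hf : ∀ x, f x =
      Matrix.trace
        (O * (List.ofFn (fun ℓ : Fin L => W ℓ * S ℓ x)).reverse.prod * ρ *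
          star ((List.ofFn (fun ℓ : Fin L => W ℓ * S ℓ x)).reverse.prod))) :
    ∃ c : (Fin L → Fin n) → (Fin L → Fin n) → ℂ, ∀ x, f x =
      ∑ j : Fin L → Fin n, ∑ k : Fin L → Fin n,
        c j k *
          Complex.exp ((-Complex.I) *
            ∑ α, (((∑ ℓ, (lam ℓ (j ℓ) α - lam ℓ (k ℓ) α)) : ℝ) : ℂ) * ((x α : ℝ) : ℂ)) := by
  set P : (Fin L → Fin n) → Matrix (Fin n) (Fin n) ℂ := fun j =>
    (List.ofFn fun ℓ => W ℓ * U ℓ * single (j ℓ) (j ℓ) 1 * star (U ℓ)).reverse.prod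
  have hcircuit : ∀ x, (List.ofFn fun ℓ => W ℓ * S ℓ x).reverse.prod =
      ∑ j : Fin L → Fin n, (∏ ℓ, Complex.exp ((-Complex.I) *
        ∑ α, ((lam ℓ (j ℓ) α : ℝ) : ℂ) * ((x α : ℝ) : ℂ))) • P j := by
    intro x
    simp only [hS, mul_diagonal_mul_eq_sum_smul, Matrix.mul_sum, mul_smul_comm, ← mul_assoc]
    exact List.prod_reverse_ofFn_sum_smul _ _
  refine ⟨fun j k => trace (O * P j * ρ * star (P k)), fun x => ?_⟩
  rw [hf, hcircuit, trace_mul_sum_smul_mul_star_sum_smul]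
  refine sum_congr rfl fun j _ => sum_congr rfl fun k _ => ?_
  rw [mul_comm, RCLike.star_def, Complex.prod_exp_mul_conj_prod_exp]

/-- Minkowski-sum band limit for re-uploading circuits: with encoder
    blocks `S_ℓ(x) = exp(−i x·G^{(ℓ)})` generated by commuting Hermitian operators
    (here given in spectral form via unitaries `U ℓ` and joint eigenvalue vectors
    `lam ℓ j ∈ ℝ^d`), fixed unitaries `W_ℓ`, a density matrix `ρ` and a Hermitian
    observable `O`, the model
    `f(x) = Tr[O · W_L S_L(x) ⋯ W_1 S_1(x) ρ (W_L S_L(x) ⋯ W_1 S_1(x))†]`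
    is a finite trigonometric polynomial in `x` whose frequencies are sums
    `Σ_ℓ (λ^{(ℓ)}_{j_ℓ} − λ^{(ℓ)}_{k_ℓ})` of layer-wise eigenvalue differences,
    i.e. its frequency support is contained in the Minkowski sum
    `Ω^{(1)} ⊕ ⋯ ⊕ Ω^{(L)}`. -/
theorem reuploading_minkowski_band_limit (n d L : ℕ)
    (U : Fin L → Matrix (Fin n) (Fin n) ℂ)
    (hU : ∀ ℓ, U ℓ ∈ Matrix.unitaryGroup (Fin n) ℂ)
    (lam : Fin L → Fin n → Fin d → ℝ)
    (S : Fin L → (Fin d → ℝ) → Matrix (Fin n) (Fin n) ℂ)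
    (hS : ∀ ℓ x, S ℓ x =
      U ℓ *
        Matrix.diagonal (fun j =>
          Complex.exp ((-Complex.I) * ∑ α, ((lam ℓ j α : ℝ) : ℂ) * ((x α : ℝ) : ℂ))) *
        star (U ℓ))
    (W : Fin L → Matrix (Fin n) (Fin n) ℂ)
    (hW : ∀ ℓ, W ℓ ∈ Matrix.unitaryGroup (Fin n) ℂ)
    (ρ O : Matrix (Fin n) (Fin n) ℂ)
    (hρ : ρ.PosSemidef) (hρ1 : ρ.trace = 1) (hO : O.IsHermitian)
    (f : (Fin d → ℝ) → ℂ)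
    (hf : ∀ x, f x =
      Matrix.trace
        (O * (List.ofFn (fun ℓ : Fin L => W ℓ * S ℓ x)).reverse.prod * ρ *
          star ((List.ofFn (fun ℓ : Fin L => W ℓ * S ℓ x)).reverse.prod))) :
    ∃ c : (Fin L → Fin n) → (Fin L → Fin n) → ℂ, ∀ x, f x =
      ∑ j : Fin L → Fin n, ∑ k : Fin L → Fin n,
        c j k *
          Complex.exp ((-Complex.I) *
            ∑ α, (((∑ ℓ, (lam ℓ (j ℓ) α - lam ℓ (k ℓ) α)) : ℝ) : ℂ) * ((x α : ℝ) : ℂ)) :=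
  reuploading_minkowski_band_limit_general n d L U lam S hS W ρ O f hf
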